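/- arXiv:2408.16473 — 5 statements merged into one kernel-verified Lean document; each statement's English description precedes it below -/
import Mathlib

section
/- If j₀ = ⌊(1/3)·log₂(r/t)⌋ and |j − j₀| > 2, then the unique positive critical point σ₀ = 2^{-j-2/3}(r/t)^{1/3} of φ₋(σ) = t·2^{4j}σ⁴ − 2^j σ r lies outside [1/4, 1], and |φ₋'(σ)| ≥ c·max(2^{4j} t, 2^j r) on [1/4, 1] for some absolute constant c > 0. -/
/-- If `j₀ = ⌊(1/3)log₂(r/t)⌋` and `|j − j₀| > 2`, then the critical point
`σ₀ = 2^{-j-2/3}(r/t)^{1/3}` of `φ₋(σ) = t·2^{4j}σ⁴ − 2^j σ r` lies outside `[1/4,1]`,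
and `|φ₋'(σ)| ≥ c·max(2^{4j}t, 2^j r)` on `[1/4,1]` for an absolute constant `c > 0`. -/
theorem stmt3 :
    ∃ c > (0:ℝ), ∀ (t r : ℝ) (j : ℤ), 0 < t → 0 < r →
      2 < |j - ⌊(1/3 : ℝ) * Real.logb 2 (r/t)⌋| →
      (2:ℝ) ^ (-(j:ℝ) - 2/3) * (r/t) ^ ((1:ℝ)/3) ∉ Set.Icc (1/4 : ℝ) 1 ∧
      ∀ σ ∈ Set.Icc (1/4 : ℝ) 1,
        c * max ((2:ℝ) ^ (4*j) * t) ((2:ℝ) ^ j * r)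
          ≤ |4 * t * (2:ℝ) ^ (4*j) * σ^3 - (2:ℝ) ^ j * r| := by
  refine ⟨3/64, by norm_num, ?_⟩
  intro t r j ht hr hj
  set x : ℝ := (1/3 : ℝ) * Real.logb 2 (r/t) with hxdef
  have hrt : 0 < r / t := div_pos hr ht
  have hx3 : r / t = (2:ℝ) ^ (3 * x) := by
    rw [hxdef, show (3:ℝ) * ((1/3 : ℝ) * Real.logb 2 (r/t)) = Real.logb 2 (r/t) by ring,
      Real.rpow_logb (by norm_num) (by norm_num) hrt]
  have hσ0 : (2:ℝ) ^ (-(j:ℝ) - 2/3) * (r/t) ^ ((1:ℝ)/3) = (2:ℝ) ^ (x - j - 2/3) := by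
    rw [hx3, ← Real.rpow_mul (by norm_num : (0:ℝ) ≤ 2),
      ← Real.rpow_add (by norm_num : (0:ℝ) < 2)]
    congr 1; ring
  have hr' : r = t * (2:ℝ) ^ (3 * x) := by
    field_simp at hx3
    linarith [hx3]
  have hfl : (⌊x⌋ : ℝ) ≤ x := Int.floor_le x
  have hfl2 : x < ⌊x⌋ + 1 := Int.lt_floor_add_one x
  have hz1 : (2:ℝ) ^ (j:ℤ) = (2:ℝ) ^ ((j:ℝ)) := (Real.rpow_intCast 2 j).symm
  have hz4 : (2:ℝ) ^ (4*j:ℤ) = (2:ℝ) ^ ((4*(j:ℝ))) := by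
    rw [← Real.rpow_intCast]; push_cast; ring_nf
  have hA : 0 < (2:ℝ) ^ (4*j:ℤ) * t := by positivity
  have hB : (2:ℝ) ^ (j:ℤ) * r = (2:ℝ) ^ (4*j:ℤ) * t * (2:ℝ) ^ (3*x - 3*(j:ℝ)) := by
    rw [hz1, hz4, hr', mul_right_comm, ← Real.rpow_add (by norm_num : (0:ℝ) < 2),
      show 4*(j:ℝ) + (3*x - 3*(j:ℝ)) = (j:ℝ) + 3*x by ring,
      Real.rpow_add (by norm_num : (0:ℝ) < 2)]
    ring
  have h3 : 3 ≤ j - ⌊x⌋ ∨ j - ⌊x⌋ ≤ -3 := by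
    rcases abs_cases (j - ⌊x⌋) with ⟨he, h0⟩ | ⟨he, h0⟩ <;> rw [he] at hj <;> omega
  rcases h3 with h3 | h3
  · -- j large: σ₀ < 1/4, derivative positive
    have hxj : x - (j:ℝ) < -2 := by
      have hle : ⌊x⌋ ≤ j - 3 := by omega
      have : (⌊x⌋ : ℝ) ≤ (j:ℝ) - 3 := by exact_mod_cast hle
      linarith
    have hσlt : (2:ℝ) ^ (x - j - 2/3) < 1/4 := by
      have h14 : (2:ℝ) ^ ((-2:ℝ)) = 1/4 := by
        rw [show (-2:ℝ) = ((-2:ℤ):ℝ) by norm_num, Real.rpow_intCast]; norm_num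
      rw [← h14]
      exact (Real.rpow_lt_rpow_left_iff (by norm_num : (1:ℝ) < 2)).mpr (by linarith)
    have hBle : (2:ℝ)^(j:ℤ) * r ≤ (2:ℝ)^(4*j:ℤ) * t * (1/64) := by
      rw [hB]
      have h64 : (2:ℝ) ^ (3*x - 3*(j:ℝ)) ≤ 1/64 := by
        have he : (2:ℝ) ^ ((-6:ℝ)) = 1/64 := by
          rw [show (-6:ℝ) = ((-6:ℤ):ℝ) by norm_num, Real.rpow_intCast]; norm_num
        rw [← he]
        exact (Real.rpow_le_rpow_left_iff (by norm_num : (1:ℝ) < 2)).mpr (by linarith)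
      nlinarith
    constructor
    · rw [hσ0]
      intro hmem
      exact absurd hmem.1 (not_le.mpr hσlt)
    · intro σ hσ
      obtain ⟨hσ1, hσ2⟩ := hσ
      rw [max_eq_left (by linarith)]
      have hcube : (1/64 : ℝ) ≤ σ^3 := by
        have h := pow_le_pow_left₀ (by norm_num : (0:ℝ) ≤ 1/4) hσ1 3
        norm_num at h; linarith
      have hpos : 3/64 * ((2:ℝ)^(4*j:ℤ) * t)
          ≤ 4 * t * (2:ℝ)^(4*j:ℤ) * σ^3 - (2:ℝ)^(j:ℤ) * r := by
        nlinarith [mul_nonneg hA.le (sub_nonneg.mpr hcube)]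
      exact le_trans hpos (le_abs_self _)
  · -- j small: σ₀ > 1, derivative negative
    have hxj : 3 ≤ x - (j:ℝ) := by
      have hle : j ≤ ⌊x⌋ - 3 := by omega
      have : (j:ℝ) ≤ (⌊x⌋:ℝ) - 3 := by exact_mod_cast hle
      linarith
    have hσgt : 1 < (2:ℝ) ^ (x - j - 2/3) := by
      have h1 : (2:ℝ) ^ ((0:ℝ)) = 1 := Real.rpow_zero 2
      rw [← h1]
      exact (Real.rpow_lt_rpow_left_iff (by norm_num : (1:ℝ) < 2)).mpr (by linarith)
    have hBge : (2:ℝ)^(4*j:ℤ) * t * 512 ≤ (2:ℝ)^(j:ℤ) * r := by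
      rw [hB]
      have h512 : (512:ℝ) ≤ (2:ℝ) ^ (3*x - 3*(j:ℝ)) := by
        have he : (2:ℝ) ^ ((9:ℝ)) = 512 := by
          rw [show (9:ℝ) = ((9:ℕ):ℝ) by norm_num, Real.rpow_natCast]; norm_num
        rw [← he]
        exact (Real.rpow_le_rpow_left_iff (by norm_num : (1:ℝ) < 2)).mpr (by linarith)
      nlinarith
    constructor
    · rw [hσ0]
      intro hmem
      exact absurd hmem.2 (not_le.mpr hσgt)
    · intro σ hσ
      obtain ⟨hσ1, hσ2⟩ := hσ
      rw [max_eq_right (by linarith)]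
      have hcube : σ^3 ≤ 1 := by
        have h := pow_le_pow_left₀ (by linarith : (0:ℝ) ≤ σ) hσ2 3
        simpa using h
      have hpos : 3/64 * ((2:ℝ)^(j:ℤ) * r)
          ≤ (2:ℝ)^(j:ℤ) * r - 4 * t * (2:ℝ)^(4*j:ℤ) * σ^3 := by
        nlinarith [mul_nonneg hA.le (sub_nonneg.mpr hcube)]
      linarith [neg_abs_le (4 * t * (2:ℝ)^(4*j:ℤ) * σ^3 - (2:ℝ)^(j:ℤ) * r)]
end

section
/- (Van der Corput lemma, first derivative case) Let φ, ψ be smooth on (a,b) with ψ compactly supported in (a,b), suppose φ' is monotonic on (a,b) and |φ'(x)| ≥ 1 for all x ∈ (a,b). Then for all λ > 0, |∫_a^b e^{iλφ(x)} ψ(x) dx| ≤ C·λ^{-1}·(|ψ(b)| + ∫_a^b |ψ'(x)| dx) for an absolute constant C. -/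
open intervalIntegral Set

private lemma deriv_nonneg_of_monoOn {f : ℝ → ℝ} {s : Set ℝ} (hs : IsOpen s)
    (hf : MonotoneOn f s) (hd : Differentiable ℝ f) {x : ℝ} (hx : x ∈ s) :
    0 ≤ deriv f x := by
  refine ge_of_tendsto (hasDerivAt_iff_tendsto_slope.mp (hd x).hasDerivAt) ?_
  filter_upwards [diff_mem_nhdsWithin_compl (hs.mem_nhds hx) {x}] with y hy
  rw [slope_def_field]
  rcases lt_or_gt_of_ne (show y ≠ x from hy.2) with h1 | h1
  · rw [div_nonneg_iff]
    exact Or.inr ⟨by simpa [sub_nonpos] using hf hy.1 hx h1.le, by linarith⟩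
  · exact div_nonneg (by simpa [sub_nonneg] using hf hx hy.1 h1.le) (by linarith)

/-- Van der Corput lemma, first derivative case: if `φ'` is monotonic and `|φ'| ≥ 1`
on `(a,b)`, and `ψ` is smooth and compactly supported in `(a,b)`, then
`|∫_a^b e^{iλφ}ψ| ≤ C λ⁻¹ (|ψ(b)| + ∫_a^b |ψ'|)`. -/
theorem stmt4 :
    ∃ C > (0:ℝ), ∀ (a b : ℝ) (φ : ℝ → ℝ) (ψ : ℝ → ℂ), a < b →
      ContDiff ℝ (⊤ : ℕ∞) φ → ContDiff ℝ (⊤ : ℕ∞) ψ → HasCompactSupport ψ →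
      tsupport ψ ⊆ Set.Ioo a b →
      (MonotoneOn (deriv φ) (Set.Ioo a b) ∨ AntitoneOn (deriv φ) (Set.Ioo a b)) →
      (∀ x ∈ Set.Ioo a b, 1 ≤ |deriv φ x|) →
      ∀ lam : ℝ, 0 < lam →
        ‖∫ x in a..b, Complex.exp (Complex.I * lam * φ x) * ψ x‖
          ≤ C * lam⁻¹ * (‖ψ b‖ + ∫ x in a..b, ‖deriv ψ x‖) := by
  refine ⟨3, by norm_num, ?_⟩
  intro a b φ ψ hab hφ hψ hψc hsupp hmono hlb lam hlam
  set φd := deriv φ with hφd_def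
  have hφ' : ContDiff ℝ ((⊤:ℕ∞):WithTop ℕ∞) φ := hφ.of_le (by simp)
  have hψ' : ContDiff ℝ ((⊤:ℕ∞):WithTop ℕ∞) ψ := hψ.of_le (by simp)
  have hφdiff : Differentiable ℝ φ := hφ'.differentiable (by simp)
  have hφdC : ContDiff ℝ ((⊤:ℕ∞):WithTop ℕ∞) φd := (contDiff_infty_iff_deriv.mp hφ').2
  have hφdd : Differentiable ℝ φd := hφdC.differentiable (by simp)
  have hφddC : Continuous (deriv φd) := (contDiff_infty_iff_deriv.mp hφdC).2.continuous
  have hψdiff : Differentiable ℝ ψ := hψ'.differentiable (by simp)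
  have hψdC : Continuous (deriv ψ) := (contDiff_infty_iff_deriv.mp hψ').2.continuous
  -- |φ'| ≥ 1 on the closed interval
  have h1 : ∀ x ∈ Icc a b, 1 ≤ |φd x| := by
    have hclosed : IsClosed {y : ℝ | 1 ≤ |φd y|} :=
      isClosed_le continuous_const (continuous_abs.comp hφdd.continuous)
    intro x hx
    have hx' : x ∈ closure (Ioo a b) := by rwa [closure_Ioo hab.ne]
    exact hclosed.closure_subset (closure_mono (fun y hy => hlb y hy) hx')
  have hne : ∀ x ∈ Icc a b, φd x ≠ 0 := by
    intro x hx h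
    have := h1 x hx
    rw [h] at this; simp at this; linarith
  have hψa : ψ a = 0 := image_eq_zero_of_notMem_tsupport
    (fun h => absurd (hsupp h) (by simp))
  have hψb : ψ b = 0 := image_eq_zero_of_notMem_tsupport
    (fun h => absurd (hsupp h) (by simp))
  have hlamC : (lam : ℂ) ≠ 0 := by exact_mod_cast hlam.ne'
  have hz : ∀ x ∈ Icc a b, Complex.I * lam * (φd x : ℂ) ≠ 0 := by
    intro x hx
    exact mul_ne_zero (mul_ne_zero Complex.I_ne_zero hlamC)
      (by exact_mod_cast hne x hx)
  -- the sign ε of φ''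
  obtain ⟨ε, hε, hεsgn⟩ :
      ∃ ε : ℝ, (ε = 1 ∨ ε = -1) ∧ ∀ x ∈ Ioo a b, 0 ≤ ε * deriv φd x := by
    rcases hmono with hm | hm
    · exact ⟨1, Or.inl rfl, fun x hx => by
        simpa using deriv_nonneg_of_monoOn isOpen_Ioo hm hφdd hx⟩
    · refine ⟨-1, Or.inr rfl, fun x hx => ?_⟩
      have hm' : MonotoneOn (fun y => -φd y) (Ioo a b) := fun u hu v hv huv => by
        simpa using hm hu hv huv
      have := deriv_nonneg_of_monoOn isOpen_Ioo hm' hφdd.neg hx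
      rw [deriv.fun_neg] at this
      linarith
  have hεabs : |ε| = 1 := by rcases hε with h | h <;> simp [h]
  -- sign on closed interval
  have hsgn : ∀ x ∈ Icc a b, |deriv φd x| = ε * deriv φd x := by
    have hclosed : IsClosed {y : ℝ | 0 ≤ ε * deriv φd y} :=
      isClosed_le continuous_const (continuous_const.mul hφddC)
    intro x hx
    have hx' : x ∈ closure (Ioo a b) := by rwa [closure_Ioo hab.ne]
    have h0 : 0 ≤ ε * deriv φd x :=
      hclosed.closure_subset (closure_mono (fun y hy => hεsgn y hy) hx')
    calc |deriv φd x| = |ε| * |deriv φd x| := by rw [hεabs, one_mul]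
    _ = |ε * deriv φd x| := (abs_mul _ _).symm
    _ = ε * deriv φd x := abs_of_nonneg h0
  -- main objects
  set e : ℝ → ℂ := fun x => Complex.exp (Complex.I * lam * φ x) with he_def
  set g : ℝ → ℂ := fun x => ψ x / (Complex.I * lam * φd x) with hg_def
  set gd : ℝ → ℂ := fun x =>
      (deriv ψ x * (Complex.I * lam * φd x) - ψ x * (Complex.I * lam * deriv φd x)) /
        (Complex.I * lam * φd x) ^ 2 with hgd_def
  have hecont : Continuous e := by
    apply Complex.continuous_exp.comp
    exact (continuous_const.mul (Complex.continuous_ofReal.comp hφdiff.continuous))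
  have hde : ∀ x, HasDerivAt e (Complex.I * lam * φd x * e x) x := by
    intro x
    have h1 : HasDerivAt (fun y : ℝ => ((φ y : ℂ))) (φd x) x :=
      (hφdiff x).hasDerivAt.ofReal_comp
    have h2 : HasDerivAt (fun y : ℝ => Complex.I * lam * (φ y : ℂ))
        (Complex.I * lam * φd x) x := h1.const_mul _
    simpa [he_def, mul_comm] using h2.cexp
  have hdg : ∀ x ∈ Icc a b, HasDerivAt g (gd x) x := by
    intro x hx
    have hnum : HasDerivAt ψ (deriv ψ x) x := (hψdiff x).hasDerivAt
    have hden : HasDerivAt (fun y : ℝ => Complex.I * lam * (φd y : ℂ))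
        (Complex.I * lam * deriv φd x) x :=
      ((hφdd x).hasDerivAt.ofReal_comp).const_mul _
    exact hnum.div hden (hz x hx)
  have hdF : ∀ x ∈ uIcc a b, HasDerivAt (fun y => e y * g y)
      (e x * ψ x + e x * gd x) x := by
    intro x hx
    rw [uIcc_of_le hab.le] at hx
    have h := (hde x).mul (hdg x hx)
    have hcanc : Complex.I * lam * φd x * e x * g x = e x * ψ x := by
      rw [hg_def]
      field_simp [hz x hx]
      rw [div_eq_iff (by exact_mod_cast hne x hx : (φd x : ℂ) ≠ 0)]
      ring
    rw [← hcanc]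
    exact h
  -- continuity / integrability
  have hgdcont : ContinuousOn gd (Icc a b) := by
    apply ContinuousOn.div
    · apply ContinuousOn.sub
      · exact (hψdC.continuousOn.mul
          ((continuous_const.mul (Complex.continuous_ofReal.comp hφdd.continuous)).continuousOn))
      · exact (hψdiff.continuous.continuousOn.mul
          ((continuous_const.mul (Complex.continuous_ofReal.comp hφddC)).continuousOn))
    · exact (continuous_const.mul (Complex.continuous_ofReal.comp hφdd.continuous)).continuousOn.pow 2
    · exact fun x hx => pow_ne_zero 2 (hz x hx)
  have hInt1 : IntervalIntegrable (fun x => e x * ψ x) MeasureTheory.volume a b :=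
    (hecont.mul hψdiff.continuous).intervalIntegrable a b
  have hInt2 : IntervalIntegrable (fun x => e x * gd x) MeasureTheory.volume a b := by
    apply ContinuousOn.intervalIntegrable
    rw [uIcc_of_le hab.le]
    exact hecont.continuousOn.mul hgdcont
  -- integration by parts
  have key : (∫ x in a..b, e x * ψ x) = - ∫ x in a..b, e x * gd x := by
    have h0 : (∫ x in a..b, (e x * ψ x + e x * gd x)) = 0 := by
      rw [intervalIntegral.integral_eq_sub_of_hasDerivAt hdF (hInt1.add hInt2)]
      simp [hg_def, hψa, hψb]
    rw [intervalIntegral.integral_add hInt1 hInt2] at h0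
    exact eq_neg_of_add_eq_zero_left h0
  -- quantitative estimates
  set M := ∫ x in a..b, ‖deriv ψ x‖ with hM_def
  have hM0 : 0 ≤ M := intervalIntegral.integral_nonneg hab.le (fun x _ => norm_nonneg _)
  have hψle : ∀ x ∈ Icc a b, ‖ψ x‖ ≤ M := by
    intro x hx
    have hftc : (∫ y in a..x, deriv ψ y) = ψ x - ψ a :=
      intervalIntegral.integral_eq_sub_of_hasDerivAt
        (fun y _ => (hψdiff y).hasDerivAt) (hψdC.intervalIntegrable a x)
    have h2 : ‖ψ x‖ = ‖∫ y in a..x, deriv ψ y‖ := by rw [hftc, hψa, sub_zero]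
    rw [h2]
    calc ‖∫ y in a..x, deriv ψ y‖ ≤ ∫ y in a..x, ‖deriv ψ y‖ :=
        intervalIntegral.norm_integral_le_integral_norm hx.1
      _ ≤ M := by
        have hadd := intervalIntegral.integral_add_adjacent_intervals
          (hψdC.norm.intervalIntegrable (μ := MeasureTheory.volume) a x)
          (hψdC.norm.intervalIntegrable (μ := MeasureTheory.volume) x b)
        have h3 : 0 ≤ ∫ y in x..b, ‖deriv ψ y‖ :=
          intervalIntegral.integral_nonneg hx.2 (fun y _ => norm_nonneg _)
        rw [hM_def]; linarith
  have hnorm_e : ∀ x : ℝ, ‖e x‖ = 1 := by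
    intro x
    rw [he_def]
    simp [Complex.norm_exp, Complex.mul_re, Complex.mul_im,
      Complex.I_re, Complex.I_im]
  -- pointwise bound on gd
  have hgdbound : ∀ x ∈ Icc a b, ‖gd x‖ ≤
      lam⁻¹ * ‖deriv ψ x‖ + (lam⁻¹ * M) * (ε * deriv φd x / (φd x)^2) := by
    intro x hx
    have hφne : (φd x : ℂ) ≠ 0 := by exact_mod_cast hne x hx
    have hφd2pos : (0:ℝ) < (φd x)^2 := pow_two_pos_of_ne_zero (hne x hx)
    have hsplit : gd x = deriv ψ x / (Complex.I * lam * φd x)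
        - ψ x * ((deriv φd x : ℝ) : ℂ) / (Complex.I * lam * (φd x : ℂ)^2) := by
      rw [hgd_def]
      field_simp
    have habs1 : ‖Complex.I * (lam:ℂ) * (φd x : ℂ)‖ = lam * |φd x| := by
      simp [map_mul, abs_of_pos hlam]
    have habs2 : ‖Complex.I * (lam:ℂ) * (φd x : ℂ)^2‖ = lam * (φd x)^2 := by
      simp [map_mul, map_pow,
        abs_of_pos hlam, sq_abs]
    have ht1 : ‖deriv ψ x / (Complex.I * lam * φd x)‖ ≤ lam⁻¹ * ‖deriv ψ x‖ := by
      rw [norm_div, habs1, inv_mul_eq_div]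
      apply div_le_div_of_nonneg_left (norm_nonneg _) hlam
      nlinarith [h1 x hx, hlam]
    have ht2 : ‖ψ x * ((deriv φd x : ℝ) : ℂ) / (Complex.I * lam * (φd x : ℂ)^2)‖
        ≤ (lam⁻¹ * M) * (ε * deriv φd x / (φd x)^2) := by
      rw [norm_div, norm_mul, habs2, Complex.norm_real, ← hsgn x hx]
      have hstep : ‖ψ x‖ * ‖deriv φd x‖ ≤ M * |deriv φd x| := by
        rw [Real.norm_eq_abs]
        exact mul_le_mul_of_nonneg_right (hψle x hx) (abs_nonneg _)
      calc ‖ψ x‖ * ‖deriv φd x‖ / (lam * (φd x)^2)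
          ≤ M * |deriv φd x| / (lam * (φd x)^2) := by
            gcongr
          _ = lam⁻¹ * M * (|deriv φd x| / (φd x)^2) := by
            field_simp
    calc ‖gd x‖ = ‖deriv ψ x / (Complex.I * lam * φd x)
        - ψ x * ((deriv φd x : ℝ) : ℂ) / (Complex.I * lam * (φd x : ℂ)^2)‖ := by rw [hsplit]
      _ ≤ ‖deriv ψ x / (Complex.I * lam * φd x)‖
          + ‖ψ x * ((deriv φd x : ℝ) : ℂ) / (Complex.I * lam * (φd x : ℂ)^2)‖ := norm_sub_le _ _
      _ ≤ _ := add_le_add ht1 ht2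
  -- integral of the phase-variation term
  have hSgnInt : IntervalIntegrable (fun x => ε * deriv φd x / (φd x)^2)
      MeasureTheory.volume a b := by
    apply ContinuousOn.intervalIntegrable
    rw [uIcc_of_le hab.le]
    exact ((continuous_const.mul hφddC).continuousOn).div
      ((hφdd.continuous.pow 2).continuousOn) (fun x hx => pow_ne_zero 2 (hne x hx))
  have hIntSign : (∫ x in a..b, ε * deriv φd x / (φd x)^2) ≤ 2 := by
    have hinv : ∀ x ∈ uIcc a b, HasDerivAt (fun y => -(φd y)⁻¹)
        (deriv φd x / (φd x)^2) x := by
      intro x hx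
      rw [uIcc_of_le hab.le] at hx
      have h := ((hφdd x).hasDerivAt.inv (hne x hx)).neg
      rw [show deriv φd x / φd x ^ 2 = -(-deriv φd x / φd x ^ 2) by ring]
      exact h
    have hIntc : IntervalIntegrable (fun x => deriv φd x / (φd x)^2)
        MeasureTheory.volume a b := by
      apply ContinuousOn.intervalIntegrable
      rw [uIcc_of_le hab.le]
      exact hφddC.continuousOn.div ((hφdd.continuous.pow 2).continuousOn)
        (fun x hx => pow_ne_zero 2 (hne x hx))
    have hval : (∫ x in a..b, deriv φd x / (φd x)^2) = (φd a)⁻¹ - (φd b)⁻¹ := by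
      rw [intervalIntegral.integral_eq_sub_of_hasDerivAt hinv hIntc]; ring
    have hre : (∫ x in a..b, ε * deriv φd x / (φd x)^2)
        = ε * ((φd a)⁻¹ - (φd b)⁻¹) := by
      simp_rw [mul_div_assoc]
      rw [intervalIntegral.integral_const_mul, hval]
    rw [hre]
    have hia : |(φd a)⁻¹| ≤ 1 := by
      rw [abs_inv]
      exact inv_le_one_of_one_le₀ (h1 a ⟨le_refl a, hab.le⟩)
    have hib : |(φd b)⁻¹| ≤ 1 := by
      rw [abs_inv]
      exact inv_le_one_of_one_le₀ (h1 b ⟨hab.le, le_refl b⟩)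
    obtain ⟨ha1, ha2⟩ := abs_le.mp hia
    obtain ⟨hb1, hb2⟩ := abs_le.mp hib
    rcases hε with h | h <;> subst h <;> linarith
  -- final chain
  have hIntgd : IntervalIntegrable (fun x => ‖e x * gd x‖) MeasureTheory.volume a b :=
    hInt2.norm
  have hIntPsi : IntervalIntegrable (fun x => lam⁻¹ * ‖deriv ψ x‖)
      MeasureTheory.volume a b := (continuous_const.mul hψdC.norm).intervalIntegrable a b
  have hIntB : IntervalIntegrable
      (fun x => lam⁻¹ * ‖deriv ψ x‖ + (lam⁻¹ * M) * (ε * deriv φd x / (φd x)^2))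
      MeasureTheory.volume a b := hIntPsi.add (hSgnInt.const_mul _)
  have hmain : ‖∫ x in a..b, e x * ψ x‖ ≤ 3 * lam⁻¹ * (‖ψ b‖ + M) := by
    calc ‖∫ x in a..b, e x * ψ x‖ = ‖∫ x in a..b, e x * gd x‖ := by rw [key, norm_neg]
      _ ≤ ∫ x in a..b, ‖e x * gd x‖ :=
          intervalIntegral.norm_integral_le_integral_norm hab.le
      _ ≤ ∫ x in a..b, (lam⁻¹ * ‖deriv ψ x‖
            + (lam⁻¹ * M) * (ε * deriv φd x / (φd x)^2)) := by
          apply intervalIntegral.integral_mono_on hab.le hIntgd hIntB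
          intro x hx
          rw [norm_mul, hnorm_e x, one_mul]
          exact hgdbound x hx
      _ = lam⁻¹ * M + (lam⁻¹ * M) * (∫ x in a..b, ε * deriv φd x / (φd x)^2) := by
          rw [intervalIntegral.integral_add hIntPsi (hSgnInt.const_mul _),
            intervalIntegral.integral_const_mul, intervalIntegral.integral_const_mul]
      _ ≤ lam⁻¹ * M + (lam⁻¹ * M) * 2 := by
          have h0 : 0 ≤ lam⁻¹ * M := by positivity
          nlinarith [hIntSign]
      _ ≤ 3 * lam⁻¹ * (‖ψ b‖ + M) := by
          rw [hψb, norm_zero, zero_add]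
          nlinarith [hM0, hlam]
  exact hmain
end

section
/- (Van der Corput lemma, second derivative case) Let φ be smooth on (a,b) with |φ''(x)| ≥ 1 for all x ∈ (a,b), and let ψ be smooth. Then for all λ > 0, |∫_a^b e^{iλφ(x)} ψ(x) dx| ≤ C·λ^{-1/2}·(|ψ(b)| + ∫_a^b |ψ'(x)| dx) for an absolute constant C. -/
open intervalIntegral

open Set MeasureTheory Complex

lemma vdc_ederiv (φ : ℝ → ℝ) (hφ : ContDiff ℝ ((⊤:ℕ∞):WithTop ℕ∞) φ) (lam : ℝ) (x : ℝ) :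
    HasDerivAt (fun y => Complex.exp (Complex.I * lam * φ y))
      (Complex.I * lam * deriv φ x * Complex.exp (Complex.I * lam * φ x)) x := by
  have h1 : HasDerivAt φ (deriv φ x) x :=
    ((hφ.differentiable (by simp)) x).hasDerivAt
  have h2 : HasDerivAt (fun y => ((φ y : ℝ) : ℂ)) (((deriv φ x : ℝ)) : ℂ) x := h1.ofReal_comp
  have h3 : HasDerivAt (fun y => Complex.I * lam * ((φ y : ℝ) : ℂ))
      (Complex.I * lam * (((deriv φ x : ℝ)) : ℂ)) x := h2.const_mul _
  simpa [mul_comm] using h3.cexp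

lemma vdc_norm_exp (lam : ℝ) (t : ℝ) : ‖Complex.exp (Complex.I * lam * t)‖ = 1 := by
  rw [Complex.norm_exp]
  simp [Complex.mul_re]

lemma vdcA (φ : ℝ → ℝ) (hφ : ContDiff ℝ ((⊤:ℕ∞):WithTop ℕ∞) φ) (lam δ : ℝ) (hl : 0 < lam) (hδ : 0 < δ)
    (p q : ℝ) (hpq : p ≤ q)
    (hsec : ∀ x ∈ Set.Icc p q, 1 ≤ deriv (deriv φ) x)
    (hsign : (∀ x ∈ Set.Icc p q, deriv φ x ≤ -δ) ∨ (∀ x ∈ Set.Icc p q, δ ≤ deriv φ x)) :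
    ‖∫ x in p..q, Complex.exp (Complex.I * lam * φ x)‖ ≤ 3 / (lam * δ) := by
  have huIcc : Set.uIcc p q = Set.Icc p q := Set.uIcc_of_le hpq
  have hφ'cont : Continuous (deriv φ) := (hφ.iterate_deriv 1).continuous
  have hφ''cont : Continuous (deriv (deriv φ)) := (hφ.iterate_deriv 2).continuous
  have hne : ∀ x ∈ Set.Icc p q, deriv φ x ≠ 0 := by
    intro x hx
    rcases hsign with h | h
    · exact ne_of_lt (lt_of_le_of_lt (h x hx) (by linarith))
    · exact ne_of_gt (lt_of_lt_of_le hδ (h x hx))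
  have habs : ∀ x ∈ Set.Icc p q, δ ≤ |deriv φ x| := by
    intro x hx
    rcases hsign with h | h
    · rw [abs_of_nonpos (by linarith [h x hx])]; linarith [h x hx]
    · rw [abs_of_pos (lt_of_lt_of_le hδ (h x hx))]; exact h x hx
  -- u = 1/(Iλφ'), v = exp(Iλφ)
  set u : ℝ → ℂ := fun x => (Complex.I * lam * deriv φ x)⁻¹ with hu_def
  set u' : ℝ → ℂ := fun x =>
    -(Complex.I * lam * deriv (deriv φ) x) / (Complex.I * lam * deriv φ x) ^ 2 with hu'_def
  set v : ℝ → ℂ := fun x => Complex.exp (Complex.I * lam * φ x) with hv_def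
  set v' : ℝ → ℂ := fun x => Complex.I * lam * deriv φ x * Complex.exp (Complex.I * lam * φ x)
    with hv'_def
  have hInl : (Complex.I * lam) ≠ 0 := by
    simp [Complex.ext_iff, Complex.mul_re, Complex.mul_im, ne_of_gt hl]
  have hcne : ∀ x ∈ Set.Icc p q, (Complex.I * lam * deriv φ x : ℂ) ≠ 0 := by
    intro x hx
    exact mul_ne_zero hInl (by exact_mod_cast hne x hx)
  have hud : ∀ x ∈ Set.uIcc p q, HasDerivAt u (u' x) x := by
    intro x hx
    rw [huIcc] at hx
    have h1 : HasDerivAt (fun y => deriv φ y) (deriv (deriv φ) x) x :=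
      (((hφ.iterate_deriv 1).differentiable (by simp)) x).hasDerivAt
    have h2 : HasDerivAt (fun y => (((deriv φ y : ℝ)) : ℂ)) (((deriv (deriv φ) x : ℝ)) : ℂ) x :=
      h1.ofReal_comp
    have h3 : HasDerivAt (fun y => Complex.I * lam * (((deriv φ y : ℝ)) : ℂ))
        (Complex.I * lam * (((deriv (deriv φ) x : ℝ)) : ℂ)) x := h2.const_mul _
    have h4 := HasDerivAt.scomp (x := x) (hasDerivAt_inv (hcne x hx)) h3
    refine h4.congr_deriv ?_
    simp only [hu'_def, smul_eq_mul]
    rw [div_eq_mul_inv]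
    ring
  have hvd : ∀ x ∈ Set.uIcc p q, HasDerivAt v (v' x) x := fun x _ => vdc_ederiv φ hφ lam x
  have hu'cont : ContinuousOn u' (Set.uIcc p q) := by
    rw [huIcc]
    apply ContinuousOn.div
    · exact (continuous_const.mul (Complex.continuous_ofReal.comp hφ''cont)).neg.continuousOn
    · exact ((continuous_const.mul (Complex.continuous_ofReal.comp hφ'cont)).pow 2).continuousOn
    · intro x hx; exact pow_ne_zero 2 (hcne x hx)
  have hu'int : IntervalIntegrable u' volume p q := hu'cont.intervalIntegrable
  have hv'int : IntervalIntegrable v' volume p q := by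
    apply Continuous.intervalIntegrable
    exact (continuous_const.mul (Complex.continuous_ofReal.comp hφ'cont)).mul
      ((continuous_const.mul (Complex.continuous_ofReal.comp hφ.continuous)).cexp)
  have hibp := intervalIntegral.integral_mul_deriv_eq_deriv_mul hud hvd hu'int hv'int
  have hmain : ∫ x in p..q, v x = u q * v q - u p * v p - ∫ x in p..q, u' x * v x := by
    rw [← hibp]
    apply intervalIntegral.integral_congr
    intro x hx
    rw [huIcc] at hx
    show v x = u x * v' x
    simp only [hu_def, hv'_def, hv_def]
    rw [← mul_assoc, inv_mul_cancel₀ (hcne x hx), one_mul]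
  -- norms
  have hnorm_c : ∀ r : ℝ, ‖(Complex.I * lam * (r:ℂ))‖ = lam * |r| := by
    intro r
    simp [norm_mul, Complex.norm_real, Real.norm_eq_abs, abs_of_pos hl]
  have hlamδ : 0 < lam * δ := mul_pos hl hδ
  have hu_bound : ∀ x ∈ Set.Icc p q, ‖u x‖ ≤ 1 / (lam * δ) := by
    intro x hx
    rw [hu_def]
    simp only [norm_inv]
    rw [hnorm_c]
    rw [one_div]
    apply inv_anti₀ hlamδ
    exact mul_le_mul_of_nonneg_left (habs x hx) (le_of_lt hl)
  -- the function h = 1/φ'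
  set h : ℝ → ℝ := fun y => (deriv φ y)⁻¹ with hh_def
  set H' : ℝ → ℝ := fun y => -(deriv (deriv φ) y) / (deriv φ y) ^ 2 with hH'_def
  have hhd : ∀ x ∈ Set.uIcc p q, HasDerivAt h (H' x) x := by
    intro x hx
    rw [huIcc] at hx
    have h1 : HasDerivAt (fun y => deriv φ y) (deriv (deriv φ) x) x :=
      (((hφ.iterate_deriv 1).differentiable (by simp)) x).hasDerivAt
    have h4 := HasDerivAt.scomp (x := x) (hasDerivAt_inv (hne x hx)) h1
    refine h4.congr_deriv ?_
    simp only [hH'_def, smul_eq_mul]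
    rw [div_eq_mul_inv]
    ring
  have hH'cont : ContinuousOn H' (Set.uIcc p q) := by
    rw [huIcc]
    apply ContinuousOn.div
    · exact hφ''cont.neg.continuousOn
    · exact (hφ'cont.pow 2).continuousOn
    · intro x hx; exact pow_ne_zero 2 (hne x hx)
  have hH'int : IntervalIntegrable H' volume p q := hH'cont.intervalIntegrable
  have hftc : ∫ x in p..q, H' x = h q - h p :=
    intervalIntegral.integral_eq_sub_of_hasDerivAt hhd hH'int
  -- ‖u' x‖ = -(1/lam) * H' x on the interval
  have hu'norm : ∀ x ∈ Set.Icc p q, ‖u' x‖ = -(1/lam) * H' x := by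
    intro x hx
    rw [hu'_def, hH'_def]
    simp only [norm_div, norm_neg, norm_pow]
    rw [hnorm_c, hnorm_c]
    have h2 : |deriv (deriv φ) x| = deriv (deriv φ) x :=
      abs_of_pos (lt_of_lt_of_le one_pos (hsec x hx))
    rw [h2]
    have h3 : deriv φ x ≠ 0 := hne x hx
    have hl' : lam ≠ 0 := ne_of_gt hl
    rw [mul_pow, _root_.sq_abs]
    field_simp
  have hint_u' : ∫ x in p..q, ‖u' x‖ ≤ 1 / (lam * δ) := by
    have : ∫ x in p..q, ‖u' x‖ = ∫ x in p..q, -(1/lam) * H' x := by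
      apply intervalIntegral.integral_congr
      intro x hx
      rw [huIcc] at hx
      exact hu'norm x hx
    rw [this, intervalIntegral.integral_const_mul, hftc]
    have hdiff : h p - h q ≤ 1 / δ := by
      have hp' : p ∈ Set.Icc p q := ⟨le_refl p, hpq⟩
      have hq' : q ∈ Set.Icc p q := ⟨hpq, le_refl q⟩
      rcases hsign with hs | hs
      · have hp0 : deriv φ p < 0 := lt_of_le_of_lt (hs p hp') (by linarith)
        have hq0 : deriv φ q < 0 := lt_of_le_of_lt (hs q hq') (by linarith)
        have h1 : h p < 0 := inv_lt_zero.mpr hp0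
        have h2 : -(1/δ) ≤ h q := by
          show -(1/δ) ≤ (deriv φ q)⁻¹
          have hq1 := hs q hq'
          rw [one_div, neg_le, ← inv_neg]
          exact inv_anti₀ hδ (by linarith)
        linarith
      · have h1 : h p ≤ 1 / δ := by
          show (deriv φ p)⁻¹ ≤ 1/δ
          rw [one_div]
          exact inv_anti₀ hδ (hs p hp')
        have h2 : 0 < h q := inv_pos.mpr (lt_of_lt_of_le hδ (hs q hq'))
        linarith
    have : -(1/lam) * (h q - h p) = (1/lam) * (h p - h q) := by ring
    rw [this]
    rw [div_mul_eq_div_div_swap]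
    calc 1/lam * (h p - h q) ≤ 1/lam * (1/δ) :=
          mul_le_mul_of_nonneg_left hdiff (by positivity)
    _ = 1/δ/lam := by ring
  -- assemble
  have hvq : ‖v q‖ = 1 := vdc_norm_exp lam (φ q)
  have hvp : ‖v p‖ = 1 := vdc_norm_exp lam (φ p)
  have hnormint : ‖∫ x in p..q, u' x * v x‖ ≤ 1 / (lam * δ) := by
    calc ‖∫ x in p..q, u' x * v x‖ ≤ ∫ x in p..q, ‖u' x * v x‖ :=
          intervalIntegral.norm_integral_le_integral_norm hpq
    _ = ∫ x in p..q, ‖u' x‖ := by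
          apply intervalIntegral.integral_congr
          intro x hx
          show ‖u' x * v x‖ = ‖u' x‖
          simp only [hv_def, norm_mul]
          rw [vdc_norm_exp lam (φ x), mul_one]
    _ ≤ 1 / (lam * δ) := hint_u'
  calc ‖∫ x in p..q, Complex.exp (Complex.I * lam * φ x)‖
      = ‖u q * v q - u p * v p - ∫ x in p..q, u' x * v x‖ := by rw [← hmain]
    _ ≤ ‖u q * v q - u p * v p‖ + ‖∫ x in p..q, u' x * v x‖ := norm_sub_le _ _
    _ ≤ (‖u q * v q‖ + ‖u p * v p‖) + ‖∫ x in p..q, u' x * v x‖ :=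
          add_le_add_left (norm_sub_le _ _) _
    _ ≤ (1/(lam*δ) + 1/(lam*δ)) + 1/(lam*δ) := by
          gcongr
          · rw [norm_mul, hvq, mul_one]
            exact hu_bound q ⟨hpq, le_refl q⟩
          · rw [norm_mul, hvp, mul_one]
            exact hu_bound p ⟨le_refl p, hpq⟩
    _ = 3 / (lam * δ) := by ring

lemma vdcB (φ : ℝ → ℝ) (hφ : ContDiff ℝ ((⊤:ℕ∞):WithTop ℕ∞) φ) (lam : ℝ) (hl : 0 < lam)
    (a b : ℝ) (hab : a ≤ b)
    (hsec : ∀ x ∈ Set.Icc a b, 1 ≤ deriv (deriv φ) x) :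
    ‖∫ x in a..b, Complex.exp (Complex.I * lam * φ x)‖ ≤ 8 * lam ^ (-(1:ℝ)/2) := by
  set δ : ℝ := lam ^ (-(1:ℝ)/2) with hδ_def
  have hδ : 0 < δ := Real.rpow_pos_of_pos hl _
  have hlamδ : lam * δ = lam ^ ((1:ℝ)/2) := by
    rw [hδ_def]
    nth_rewrite 1 [← Real.rpow_one lam]
    rw [← Real.rpow_add hl]
    norm_num
  have h3δ : 3 / (lam * δ) = 3 * δ := by
    rw [hlamδ, hδ_def, neg_div, Real.rpow_neg (le_of_lt hl), div_eq_mul_inv]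
  have hφ'cont : Continuous (deriv φ) := (hφ.iterate_deriv 1).continuous
  have hmono : StrictMonoOn (deriv φ) (Set.Icc a b) := by
    apply strictMonoOn_of_deriv_pos (convex_Icc a b) hφ'cont.continuousOn
    intro x hx
    rw [interior_Icc] at hx
    exact lt_of_lt_of_le one_pos (hsec x (Set.mem_Icc_of_Ioo hx))
  have hmono' : MonotoneOn (deriv φ) (Set.Icc a b) := hmono.monotoneOn
  have hslope : ∀ x ∈ Set.Icc a b, ∀ y ∈ Set.Icc a b, x ≤ y →
      y - x ≤ deriv φ y - deriv φ x := by
    intro x hx y hy hxy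
    set g : ℝ → ℝ := fun t => deriv φ t - t with hg_def
    have hgmono : MonotoneOn g (Set.Icc a b) := by
      apply monotoneOn_of_deriv_nonneg (convex_Icc a b)
        (hφ'cont.continuousOn.sub continuousOn_id)
      · intro t ht
        exact (((hφ.iterate_deriv 1).differentiable (by simp)).sub
          differentiable_id).differentiableOn t ht
      · intro t ht
        rw [interior_Icc] at ht
        have h1 : HasDerivAt g (deriv (deriv φ) t - 1) t := by
          exact ((((hφ.iterate_deriv 1).differentiable
            (by simp)) t).hasDerivAt).sub (hasDerivAt_id t)
        show 0 ≤ deriv g t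
        rw [h1.deriv]
        linarith [hsec t (Set.mem_Icc_of_Ioo ht)]
    have := hgmono hx hy hxy
    simp only [hg_def] at this
    linarith
  have hintble : ∀ p q : ℝ, IntervalIntegrable
      (fun x => Complex.exp (Complex.I * lam * φ x)) MeasureTheory.volume p q := by
    intro p q
    apply Continuous.intervalIntegrable
    exact ((continuous_const.mul (Complex.continuous_ofReal.comp hφ.continuous)).cexp)
  -- trivial bound
  have htriv : ∀ p q : ℝ, p ≤ q →
      ‖∫ x in p..q, Complex.exp (Complex.I * lam * φ x)‖ ≤ q - p := by
    intro p q hpq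
    calc ‖∫ x in p..q, Complex.exp (Complex.I * lam * φ x)‖ ≤ 1 * |q - p| :=
          intervalIntegral.norm_integral_le_of_norm_le_const
            (fun x _ => le_of_eq (vdc_norm_exp lam (φ x)))
    _ = q - p := by rw [one_mul, _root_.abs_of_nonneg (by linarith : (0:ℝ) ≤ q - p)]
  by_cases hA : δ ≤ deriv φ a
  · -- φ' ≥ δ everywhere
    have := vdcA φ hφ lam δ hl hδ a b hab hsec
      (Or.inr (fun x hx => le_trans hA (hmono' ⟨le_refl a, hab⟩ hx hx.1)))
    rw [h3δ] at this
    nlinarith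
  by_cases hB : deriv φ b ≤ -δ
  · have := vdcA φ hφ lam δ hl hδ a b hab hsec
      (Or.inl (fun x hx => le_trans (hmono' hx ⟨hab, le_refl b⟩ hx.2) hB))
    rw [h3δ] at this
    nlinarith
  push_neg at hA hB
  -- find c
  have hc : ∃ c ∈ Set.Icc a b, (-δ ≤ deriv φ c) ∧
      (c = a ∨ ∀ x ∈ Set.Icc a c, deriv φ x ≤ -δ) := by
    by_cases h : -δ ≤ deriv φ a
    · exact ⟨a, ⟨le_refl a, hab⟩, h, Or.inl rfl⟩
    · push_neg at h
      have : (-δ) ∈ Set.Icc (deriv φ a) (deriv φ b) := ⟨le_of_lt h, le_of_lt hB⟩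
      obtain ⟨c, hc1, hc2⟩ := intermediate_value_Icc hab hφ'cont.continuousOn this
      refine ⟨c, hc1, le_of_eq hc2.symm, Or.inr ?_⟩
      intro x hx
      rw [← hc2]
      exact hmono' ⟨hx.1, le_trans hx.2 hc1.2⟩ hc1 hx.2
  have hd : ∃ d ∈ Set.Icc a b, (deriv φ d ≤ δ) ∧
      (d = b ∨ ∀ x ∈ Set.Icc d b, δ ≤ deriv φ x) := by
    by_cases h : deriv φ b ≤ δ
    · exact ⟨b, ⟨hab, le_refl b⟩, h, Or.inl rfl⟩
    · push_neg at h
      have : δ ∈ Set.Icc (deriv φ a) (deriv φ b) := ⟨le_of_lt hA, le_of_lt h⟩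
      obtain ⟨d, hd1, hd2⟩ := intermediate_value_Icc hab hφ'cont.continuousOn this
      refine ⟨d, hd1, le_of_eq hd2, Or.inr ?_⟩
      intro x hx
      rw [← hd2]
      exact hmono' hd1 ⟨le_trans hd1.1 hx.1, hx.2⟩ hx.1
  obtain ⟨c, hcI, hcge, hcOr⟩ := hc
  obtain ⟨d, hdI, hdle, hdOr⟩ := hd
  have hcd : c ≤ d := by
    by_contra hlt
    push_neg at hlt
    rcases hcOr with rfl | hcP
    · exact absurd hdI.1 (not_le.mpr hlt)
    rcases hdOr with rfl | hdP
    · exact absurd hcI.2 (not_le.mpr hlt)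
    have h1 : deriv φ c ≤ -δ := hcP c ⟨hcI.1, le_refl c⟩
    have h2 : δ ≤ deriv φ c := hdP c ⟨le_of_lt hlt, hcI.2⟩
    linarith
  have hdc2δ : d - c ≤ 2 * δ := by
    have := hslope c hcI d hdI hcd
    linarith
  -- split the integral
  have hsplit : (∫ x in a..b, Complex.exp (Complex.I * lam * φ x)) =
      (∫ x in a..c, Complex.exp (Complex.I * lam * φ x)) +
      (∫ x in c..d, Complex.exp (Complex.I * lam * φ x)) +
      (∫ x in d..b, Complex.exp (Complex.I * lam * φ x)) := by
    rw [intervalIntegral.integral_add_adjacent_intervals (hintble a c) (hintble c d),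
      intervalIntegral.integral_add_adjacent_intervals (hintble a d) (hintble d b)]
  have hbd1 : ‖∫ x in a..c, Complex.exp (Complex.I * lam * φ x)‖ ≤ 3 * δ := by
    rcases hcOr with rfl | hcP
    · simp [intervalIntegral.integral_same]
      positivity
    · have := vdcA φ hφ lam δ hl hδ a c hcI.1
        (fun x hx => hsec x ⟨hx.1, le_trans hx.2 hcI.2⟩) (Or.inl hcP)
      rw [h3δ] at this
      exact this
  have hbd3 : ‖∫ x in d..b, Complex.exp (Complex.I * lam * φ x)‖ ≤ 3 * δ := by
    rcases hdOr with rfl | hdP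
    · simp [intervalIntegral.integral_same]
      positivity
    · have := vdcA φ hφ lam δ hl hδ d b hdI.2
        (fun x hx => hsec x ⟨le_trans hdI.1 hx.1, hx.2⟩) (Or.inr hdP)
      rw [h3δ] at this
      exact this
  have hbd2 : ‖∫ x in c..d, Complex.exp (Complex.I * lam * φ x)‖ ≤ 2 * δ :=
    le_trans (htriv c d hcd) hdc2δ
  calc ‖∫ x in a..b, Complex.exp (Complex.I * lam * φ x)‖
      ≤ ‖∫ x in a..c, Complex.exp (Complex.I * lam * φ x)‖ +
        ‖∫ x in c..d, Complex.exp (Complex.I * lam * φ x)‖ +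
        ‖∫ x in d..b, Complex.exp (Complex.I * lam * φ x)‖ := by
        rw [hsplit]
        exact le_trans (norm_add_le _ _) (add_le_add_left (norm_add_le _ _) _)
    _ ≤ 3 * δ + 2 * δ + 3 * δ := by gcongr
    _ = 8 * δ := by ring

lemma vdc_interval_conj (f : ℝ → ℂ) (a b : ℝ) :
    ∫ x in a..b, (starRingEnd ℂ) (f x) = (starRingEnd ℂ) (∫ x in a..b, f x) := by
  simp [intervalIntegral, ← integral_conj]

lemma vdcC (φ : ℝ → ℝ) (hφ : ContDiff ℝ ((⊤:ℕ∞):WithTop ℕ∞) φ) (lam : ℝ) (hl : 0 < lam)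
    (a b : ℝ) (hab : a < b)
    (hsec : ∀ x ∈ Set.Ioo a b, 1 ≤ |deriv (deriv φ) x|) :
    ∀ y ∈ Set.Icc a b, ‖∫ x in a..y, Complex.exp (Complex.I * lam * φ x)‖
      ≤ 8 * lam ^ (-(1:ℝ)/2) := by
  have hφ''cont : Continuous (deriv (deriv φ)) := (hφ.iterate_deriv 2).continuous
  -- extend to Icc
  have hsecIcc : ∀ x ∈ Set.Icc a b, 1 ≤ |deriv (deriv φ) x| := by
    have hclosed : IsClosed {x : ℝ | 1 ≤ |deriv (deriv φ) x|} :=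
      isClosed_le continuous_const hφ''cont.abs
    have h1 : Set.Icc a b ⊆ {x : ℝ | 1 ≤ |deriv (deriv φ) x|} := by
      rw [← closure_Ioo (ne_of_lt hab)]
      exact closure_minimal hsec hclosed
    exact fun x hx => h1 hx
  -- constant sign
  have hsign : (∀ x ∈ Set.Icc a b, 1 ≤ deriv (deriv φ) x) ∨
      (∀ x ∈ Set.Icc a b, deriv (deriv φ) x ≤ -1) := by
    by_contra hcon
    push_neg at hcon
    obtain ⟨⟨x, hx, hx'⟩, ⟨y, hy, hy'⟩⟩ := hcon
    have hxneg : deriv (deriv φ) x ≤ -1 := by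
      rcases le_abs'.mp (hsecIcc x hx) with h | h
      · exact h
      · exact absurd h (not_le.mpr hx')
    have hypos : 1 ≤ deriv (deriv φ) y := by
      rcases le_abs'.mp (hsecIcc y hy) with h | h
      · linarith
      · exact h
    have h0 : (0:ℝ) ∈ Set.uIcc (deriv (deriv φ) x) (deriv (deriv φ) y) := by
      rw [Set.mem_uIcc]
      left
      constructor <;> linarith
    obtain ⟨z, hz1, hz2⟩ := intermediate_value_uIcc
      (hφ''cont.continuousOn (s := Set.uIcc x y)) h0
    have hz3 : z ∈ Set.Icc a b := Set.uIcc_subset_Icc hx hy hz1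
    have := hsecIcc z hz3
    rw [hz2] at this
    norm_num at this
  intro y hy
  rcases hsign with hpos | hneg
  · exact vdcB φ hφ lam hl a y hy.1 (fun x hx => hpos x ⟨hx.1, le_trans hx.2 hy.2⟩)
  · -- use -φ and conjugation
    set φn : ℝ → ℝ := fun t => -φ t with hφn_def
    have hφn : ContDiff ℝ ((⊤:ℕ∞):WithTop ℕ∞) φn := hφ.neg
    have hd1 : deriv φn = fun t => -deriv φ t := by
      funext t
      exact deriv.neg
    have hd2 : ∀ t, deriv (deriv φn) t = -deriv (deriv φ) t := by
      intro t
      rw [hd1]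
      exact deriv.neg
    have hsecn : ∀ x ∈ Set.Icc a y, 1 ≤ deriv (deriv φn) x := by
      intro x hx
      rw [hd2]
      have := hneg x ⟨hx.1, le_trans hx.2 hy.2⟩
      linarith
    have hB := vdcB φn hφn lam hl a y hy.1 hsecn
    have hconj : ∀ t : ℝ, Complex.exp (Complex.I * lam * φn t) =
        (starRingEnd ℂ) (Complex.exp (Complex.I * lam * φ t)) := by
      intro t
      rw [← Complex.exp_conj]
      congr 1
      simp [hφn_def, Complex.ext_iff, Complex.mul_re, Complex.mul_im]
    rw [show (∫ x in a..y, Complex.exp (Complex.I * lam * φn x)) =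
        ∫ x in a..y, (starRingEnd ℂ) (Complex.exp (Complex.I * lam * φ x)) from
        intervalIntegral.integral_congr (fun x _ => hconj x)] at hB
    rw [vdc_interval_conj, RCLike.norm_conj] at hB
    exact hB

/-- Van der Corput lemma, second derivative case: if `|φ''| ≥ 1` on `(a,b)` and `ψ`
is smooth, then `|∫_a^b e^{iλφ}ψ| ≤ C λ^{-1/2} (|ψ(b)| + ∫_a^b |ψ'|)`. -/
theorem stmt5 :
    ∃ C > (0:ℝ), ∀ (a b : ℝ) (φ : ℝ → ℝ) (ψ : ℝ → ℂ), a < b →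
      ContDiff ℝ (⊤ : ℕ∞) φ → ContDiff ℝ (⊤ : ℕ∞) ψ →
      (∀ x ∈ Set.Ioo a b, 1 ≤ |deriv (deriv φ) x|) →
      ∀ lam : ℝ, 0 < lam →
        ‖∫ x in a..b, Complex.exp (Complex.I * lam * φ x) * ψ x‖
          ≤ C * lam ^ (-(1:ℝ)/2) * (‖ψ b‖ + ∫ x in a..b, ‖deriv ψ x‖) := by
  refine ⟨8, by norm_num, ?_⟩
  intro a b φ ψ hab hφ0 hψ0 hsec lam hl
  have hφ : ContDiff ℝ ((⊤:ℕ∞):WithTop ℕ∞) φ := hφ0.of_le (by simp)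
  have hψ : ContDiff ℝ ((⊤:ℕ∞):WithTop ℕ∞) ψ := hψ0.of_le (by simp)
  set δ : ℝ := lam ^ (-(1:ℝ)/2) with hδ_def
  have hδ : 0 < δ := Real.rpow_pos_of_pos hl _
  set e : ℝ → ℂ := fun x => Complex.exp (Complex.I * lam * φ x) with he_def
  have hecont : Continuous e :=
    (continuous_const.mul (Complex.continuous_ofReal.comp hφ.continuous)).cexp
  set F : ℝ → ℂ := fun x => ∫ t in a..x, e t with hF_def
  have hFd : ∀ x : ℝ, HasDerivAt F (e x) x := fun x =>
    (hecont.integral_hasStrictDerivAt a x).hasDerivAt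
  have hFcont : Continuous F :=
    (Differentiable.continuous (fun x => (hFd x).differentiableAt))
  have hψ'cont : Continuous (deriv ψ) := (hψ.iterate_deriv 1).continuous
  have hψd : ∀ x ∈ Set.uIcc a b, HasDerivAt ψ (deriv ψ x) x := fun x _ =>
    ((hψ.differentiable (by simp)) x).hasDerivAt
  have heint : IntervalIntegrable e MeasureTheory.volume a b := hecont.intervalIntegrable a b
  have hψ'int : IntervalIntegrable (deriv ψ) MeasureTheory.volume a b :=
    hψ'cont.intervalIntegrable a b
  have hibp := intervalIntegral.integral_mul_deriv_eq_deriv_mul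
    (u := F) (v := ψ) (u' := e) (v' := deriv ψ)
    (fun x _ => hFd x) hψd heint hψ'int
  have hFa : F a = 0 := intervalIntegral.integral_same
  have hmain : (∫ x in a..b, e x * ψ x) = F b * ψ b - ∫ x in a..b, F x * deriv ψ x := by
    rw [hibp, hFa, zero_mul, sub_zero]
    ring
  have hFbound : ∀ y ∈ Set.Icc a b, ‖F y‖ ≤ 8 * δ := by
    intro y hy
    exact vdcC φ hφ lam hl a b hab hsec y hy
  have hintnonneg : 0 ≤ ∫ x in a..b, ‖deriv ψ x‖ :=
    intervalIntegral.integral_nonneg (le_of_lt hab) (fun x _ => norm_nonneg _)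
  have h2 : ‖∫ x in a..b, F x * deriv ψ x‖ ≤ 8 * δ * ∫ x in a..b, ‖deriv ψ x‖ := by
    calc ‖∫ x in a..b, F x * deriv ψ x‖ ≤ ∫ x in a..b, ‖F x * deriv ψ x‖ :=
          intervalIntegral.norm_integral_le_integral_norm (le_of_lt hab)
    _ ≤ ∫ x in a..b, 8 * δ * ‖deriv ψ x‖ := by
          apply intervalIntegral.integral_mono_on (le_of_lt hab)
          · exact (hFcont.mul hψ'cont).norm.intervalIntegrable a b
          · exact (continuous_const.mul hψ'cont.norm).intervalIntegrable a b
          · intro x hx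
            rw [norm_mul]
            exact mul_le_mul_of_nonneg_right (hFbound x hx) (norm_nonneg _)
    _ = 8 * δ * ∫ x in a..b, ‖deriv ψ x‖ := intervalIntegral.integral_const_mul _ _
  calc ‖∫ x in a..b, Complex.exp (Complex.I * lam * φ x) * ψ x‖
      = ‖F b * ψ b - ∫ x in a..b, F x * deriv ψ x‖ := by rw [← hmain]
    _ ≤ ‖F b * ψ b‖ + ‖∫ x in a..b, F x * deriv ψ x‖ := norm_sub_le _ _
    _ ≤ 8 * δ * ‖ψ b‖ + 8 * δ * ∫ x in a..b, ‖deriv ψ x‖ := by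
          apply add_le_add _ h2
          rw [norm_mul]
          exact mul_le_mul_of_nonneg_right (hFbound b ⟨le_of_lt hab, le_refl b⟩)
            (norm_nonneg _)
    _ = 8 * δ * (‖ψ b‖ + ∫ x in a..b, ‖deriv ψ x‖) := by ring
end

section
/- Suppose a family of kernels K_j(x,y), j ∈ ℤ, satisfies |K_j(x,y)| ≤ C·2^{2j}(1 + 2^{4j}|t|)^{-1/2} when |j − j₀| ≤ 2 and |K_j(x,y)| ≤ C·2^{2j}(1 + 2^{4j}|t|)^{-1} when |j − j₀| > 2, for some j₀ ∈ ℤ (possibly depending on t, x, y) and t ≠ 0. Then the sum K(x,y) = Σ_{j∈ℤ} K_j(x,y) converges absolutely and |K(x,y)| ≤ C'·|t|^{-1/2}. -/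
/-!
Put `s = √|t|` and `u_j = 4^j s`. A far term is at most
`C s⁻¹ u_j / (1 + u_j²) ≤ C s⁻¹ min(u_j, u_j⁻¹)`, which decays geometrically in `|j - n|` for
the index `n` at which `u_n ≈ 1`; each of the at most five near terms is at most `C s⁻¹`. Both
sums are therefore `O(s⁻¹) = O(|t|^{-1/2})`, uniformly in `j₀` and `n`.
-/

lemma summable_zpow_neg_abs {b : ℝ} (hb : 1 < b) : Summable fun i : ℤ => b ^ (-|i|) := by
  have hgeom : Summable fun k : ℕ => b⁻¹ ^ k :=
    summable_geometric_of_lt_one (by positivity) (inv_lt_one_of_one_lt₀ hb)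
  apply Summable.of_nat_of_neg <;> simpa [zpow_neg, ← inv_zpow] using hgeom

lemma hasSum_zpow_neg_abs_sub {b : ℝ} (hb : 1 < b) (n : ℤ) :
    HasSum (fun j : ℤ => b ^ (-|j - n|)) (∑' i : ℤ, b ^ (-|i|)) :=
  (Equiv.subRight n).hasSum_iff (f := fun i : ℤ => b ^ (-|i|)) |>.mpr
    (summable_zpow_neg_abs hb).hasSum

lemma exists_min_le_mul_zpow_neg_abs {b x : ℝ} (hb : 1 < b) (hx : 0 < x) :
    ∃ n : ℤ, ∀ j : ℤ, min (b ^ j * x) (b ^ j * x)⁻¹ ≤ b * b ^ (-|j - n|) := by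
  obtain ⟨n, hn, hn'⟩ := exists_mem_Ico_zpow (inv_pos.mpr hx) hb
  have hb0 : 0 < b := by linarith
  refine ⟨n, fun j => ?_⟩
  rcases le_or_gt j n with hj | hj
  · have hx' : x ≤ b ^ (-n) := by
      rw [zpow_neg]; exact (le_inv_comm₀ hx (by positivity)).mpr hn
    calc min (b ^ j * x) (b ^ j * x)⁻¹ ≤ b ^ j * x := min_le_left _ _
      _ ≤ b ^ j * b ^ (-n) := by gcongr
      _ = b ^ (-|j - n|) := by
        rw [← zpow_add₀ hb0.ne', abs_of_nonpos (by omega)]; ring_nf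
      _ ≤ b * b ^ (-|j - n|) := le_mul_of_one_le_left (by positivity) hb.le
  · calc min (b ^ j * x) (b ^ j * x)⁻¹ ≤ (b ^ j * x)⁻¹ := min_le_right _ _
      _ = b ^ (-j) * x⁻¹ := by rw [mul_inv, zpow_neg]
      _ ≤ b ^ (-j) * b ^ (n + 1) := by gcongr
      _ = b * b ^ (-|j - n|) := by
        rw [← zpow_add₀ hb0.ne', abs_of_pos (by omega), ← zpow_one_add₀ hb0.ne']; ring_nf

lemma mul_inv_one_add_sq_mul_sq_le {w s : ℝ} (hw : 0 < w) (hs : 0 < s) :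
    w * (1 + w ^ 2 * s ^ 2)⁻¹ ≤ s⁻¹ * min (w * s) (w * s)⁻¹ := by
  have hu : 0 < w * s := by positivity
  have hscale : w * (1 + w ^ 2 * s ^ 2)⁻¹ = s⁻¹ * ((w * s) / (1 + (w * s) ^ 2)) := by
    field_simp
  rw [hscale]
  gcongr
  refine le_min ?_ ?_
  · exact div_le_self hu.le (by nlinarith)
  · rw [div_le_iff₀ (by positivity)]
    field_simp
    nlinarith

lemma mul_rpow_neg_half_one_add_sq_mul_sq_le {w s : ℝ} (hs : 0 < s) :
    w * (1 + w ^ 2 * s ^ 2) ^ (-(1:ℝ)/2) ≤ s⁻¹ := by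
  have hroot : w * s ≤ √(1 + w ^ 2 * s ^ 2) :=
    Real.le_sqrt_of_sq_le (by nlinarith)
  rw [neg_div, Real.rpow_neg (by positivity), ← Real.sqrt_eq_rpow,
    ← div_eq_mul_inv, div_le_iff₀ (by positivity)]
  calc w = w * s * s⁻¹ := by field_simp
    _ ≤ √(1 + w ^ 2 * s ^ 2) * s⁻¹ := by gcongr
    _ = s⁻¹ * √(1 + w ^ 2 * s ^ 2) := mul_comm _ _

lemma one_le_sixteen_mul_four_zpow_neg_abs {i : ℤ} (hi : |i| ≤ 2) :
    1 ≤ 16 * (4:ℝ) ^ (-|i|) :=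
  calc (1:ℝ) = 16 * 4 ^ (-2 : ℤ) := by norm_num
    _ ≤ 16 * 4 ^ (-|i|) := by gcongr; norm_num

lemma two_zpow_two_mul (j : ℤ) : (2:ℝ) ^ (2 * j) = 4 ^ j := by
  rw [zpow_mul]; norm_num

lemma two_zpow_four_mul (j : ℤ) : (2:ℝ) ^ (4 * j) = (4 ^ j) ^ 2 := by
  rw [show 4 * j = 2 * j + 2 * j by ring, zpow_add₀ two_ne_zero, two_zpow_two_mul, sq]

/-- Dyadic summation: if `|K_j(x,y)| ≤ C·2^{2j}(1+2^{4j}|t|)^{-1/2}` for `|j−j₀| ≤ 2`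
and `|K_j(x,y)| ≤ C·2^{2j}(1+2^{4j}|t|)^{-1}` for `|j−j₀| > 2`, then
`Σ_j K_j(x,y)` converges absolutely with `|Σ_j K_j(x,y)| ≤ C'|t|^{-1/2}`. -/
theorem stmt6 (C : ℝ) (hC : 0 < C) :
    ∃ C' > (0:ℝ), ∀ (t : ℝ), t ≠ 0 →
      ∀ (K : ℤ → (EuclideanSpace ℝ (Fin 2)) → (EuclideanSpace ℝ (Fin 2)) → ℂ)
        (x y : EuclideanSpace ℝ (Fin 2)) (j₀ : ℤ),
      (∀ j : ℤ, |j - j₀| ≤ 2 →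
        ‖K j x y‖ ≤ C * (2:ℝ) ^ (2*j) * (1 + (2:ℝ) ^ (4*j) * |t|) ^ (-(1:ℝ)/2)) →
      (∀ j : ℤ, 2 < |j - j₀| →
        ‖K j x y‖ ≤ C * (2:ℝ) ^ (2*j) * (1 + (2:ℝ) ^ (4*j) * |t|)⁻¹) →
      Summable (fun j : ℤ => ‖K j x y‖) ∧
        ‖∑' j : ℤ, K j x y‖ ≤ C' * |t| ^ (-(1:ℝ)/2) := by
  have h4 : (1:ℝ) < 4 := by norm_num
  set S := ∑' i : ℤ, (4:ℝ) ^ (-|i|)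
  have hS : 0 < S := (summable_zpow_neg_abs h4).tsum_pos (fun _ => by positivity) 0 (by positivity)
  refine ⟨20 * C * S, by positivity, fun t ht K x y j₀ hnear hfar => ?_⟩
  set s := √|t|
  have hs : 0 < s := Real.sqrt_pos.mpr (abs_pos.mpr ht)
  have hts : |t| = s ^ 2 := (Real.sq_sqrt (abs_nonneg t)).symm
  simp only [two_zpow_two_mul, two_zpow_four_mul, hts, mul_assoc] at hnear hfar
  obtain ⟨n, hn⟩ := exists_min_le_mul_zpow_neg_abs h4 hs
  -- The at most five terms near `j₀` are absorbed into a geometric series centred at `j₀`.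
  have hdom : ∀ j, ‖K j x y‖ ≤ C * s⁻¹ * (16 * 4 ^ (-|j - j₀|) + 4 * 4 ^ (-|j - n|)) := by
    intro j
    have hweight₀ : (0:ℝ) ≤ 4 ^ (-|j - j₀|) := by positivity
    have hweightₙ : (0:ℝ) ≤ 4 ^ (-|j - n|) := by positivity
    rcases le_or_gt |j - j₀| 2 with hj | hj
    · have hnear_weight := one_le_sixteen_mul_four_zpow_neg_abs hj
      calc ‖K j x y‖ ≤ C * s⁻¹ :=
            (hnear j hj).trans (mul_le_mul_of_nonneg_left
              (mul_rpow_neg_half_one_add_sq_mul_sq_le hs) hC.le)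
        _ ≤ C * s⁻¹ * (16 * 4 ^ (-|j - j₀|) + 4 * 4 ^ (-|j - n|)) :=
            le_mul_of_one_le_right (by positivity) (by linarith)
    · calc ‖K j x y‖ ≤ C * (s⁻¹ * min (4 ^ j * s) (4 ^ j * s)⁻¹) :=
            (hfar j hj).trans (mul_le_mul_of_nonneg_left
              (mul_inv_one_add_sq_mul_sq_le (by positivity) hs) hC.le)
        _ ≤ C * (s⁻¹ * (4 * 4 ^ (-|j - n|))) := by gcongr; exact hn j
        _ ≤ C * s⁻¹ * (16 * 4 ^ (-|j - j₀|) + 4 * 4 ^ (-|j - n|)) := by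
            rw [← mul_assoc]; gcongr; linarith
  have hg : HasSum (fun j => C * s⁻¹ * (16 * 4 ^ (-|j - j₀|) + 4 * 4 ^ (-|j - n|)))
      (C * s⁻¹ * (16 * S + 4 * S)) :=
    (((hasSum_zpow_neg_abs_sub h4 j₀).mul_left 16).add
      ((hasSum_zpow_neg_abs_sub h4 n).mul_left 4)).mul_left _
  refine ⟨hg.summable.of_nonneg_of_le (fun _ => norm_nonneg _) hdom, ?_⟩
  calc ‖∑' j, K j x y‖ ≤ C * s⁻¹ * (16 * S + 4 * S) := tsum_of_norm_bounded hg hdom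
    _ = 20 * C * S * |t| ^ (-(1:ℝ)/2) := by
      rw [neg_div, Real.rpow_neg (abs_nonneg t), ← Real.sqrt_eq_rpow]; ring
end

section
/- For α ∈ ℝ \ ℤ, with B_α(s, θ₁, θ₂) = −(e^{-iα(θ₁−θ₂) − iα₁₂}/(4π²))·(sin(π|α|)e^{-s|α|} + sin(απ)·((e^{-s} + cos(θ₁−θ₂))sinh(sα) + i sin(θ₁−θ₂)cosh(sα))/(cosh s + cos(θ₁−θ₂))), the integral ∫₀^∞ |B_α(s,θ₁,θ₂)| ds is finite and bounded uniformly in θ₁, θ₂ (for fixed α with 0 < |α| < 1, say). -/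
/-!
The phase factor has modulus `1/(4π²)` and `|sin(π|α|) e^{-s|α|}| ≤ e^{-|α|s}`; the work is in the
fraction. Write `a = |α|`, `φ = θ₁ - θ₂`, `D = cosh s + cos φ`. For `s ≥ 1` we have `D ≥ eˢ/8`
while the numerator is `O(e^{as})`, so the fraction decays like `e^{-(1-a)s}`. For `s ≤ 1` we have
`D ≥ s²/2 + (1 + cos φ)`, and `|e^{-s} + cos φ| ≤ s + (1 + cos φ)` keeps the `sinh` term bounded.
The `sin φ · cosh` term is the only one that is not uniformly bounded as `φ → π`: since
`sin² φ ≤ 2(1 + cos φ)` it is dominated by the Lorentzian `|sin φ| / (s² + sin² φ)`, whose integral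
over `(0, ∞)` is `π/2` whatever `φ` is.
-/

open Real MeasureTheory Set

namespace Real

theorem one_add_sq_div_two_le_cosh (x : ℝ) : 1 + x ^ 2 / 2 ≤ cosh x := by
  have hsq : (x / 2) ^ 2 ≤ sinh (x / 2) ^ 2 := by
    rw [← sq_abs (sinh _), abs_sinh, ← sq_abs (x / 2)]
    gcongr
    exact self_le_sinh_iff.2 (abs_nonneg _)
  have h := cosh_two_mul (x / 2)
  rw [mul_div_cancel₀ x two_ne_zero, cosh_sq] at h
  linarith

theorem sinh_le_exp_sub_one (x : ℝ) : sinh x ≤ exp x - 1 := by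
  linarith [sinh_add_cosh x, one_le_cosh x]

theorem sinh_le_exp_div_two (x : ℝ) : sinh x ≤ exp x / 2 := by
  rw [sinh_eq]
  linarith [exp_pos (-x)]

theorem cosh_le_exp {x : ℝ} (hx : 0 ≤ x) : cosh x ≤ exp x := by
  linarith [sinh_add_cosh x, sinh_nonneg_iff.2 hx]

end Real

theorem integrableOn_Ioi_abs_div_sq_add_sq_and_integral_le (k : ℝ) :
    IntegrableOn (fun x : ℝ => |k| / (x ^ 2 + k ^ 2)) (Ioi 0) ∧
      ∫ x in Ioi 0, |k| / (x ^ 2 + k ^ 2) ≤ π / 2 := by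
  rcases eq_or_ne k 0 with rfl | hk
  · simpa using pi_div_two_pos.le
  have hk' : 0 < |k|⁻¹ := inv_pos.2 (abs_pos.2 hk)
  have hrescale : (fun x : ℝ => |k| / (x ^ 2 + k ^ 2))
      = fun x => |k|⁻¹ * (1 + (|k|⁻¹ * x) ^ 2)⁻¹ := by
    ext x
    field_simp
    rw [sq_abs]
    ring
  rw [hrescale]
  refine ⟨Integrable.const_mul ((integrableOn_Ioi_comp_mul_left_iff (fun x => (1 + x ^ 2)⁻¹) 0
    hk').2 integrable_inv_one_add_sq.integrableOn) _, le_of_eq ?_⟩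
  rw [integral_const_mul, integral_comp_mul_left_Ioi (fun x => (1 + x ^ 2)⁻¹) 0 hk',
    mul_zero, integral_Ioi_inv_one_add_sq, arctan_zero, smul_eq_mul, ← mul_assoc,
    mul_inv_cancel₀ hk'.ne', one_mul, sub_zero]

theorem sq_div_two_add_one_add_cos_le_cosh_add_cos (s φ : ℝ) :
    s ^ 2 / 2 + (1 + cos φ) ≤ cosh s + cos φ := by
  linarith [one_add_sq_div_two_le_cosh s]

theorem sq_add_sin_sq_div_two_le_cosh_add_cos (s φ : ℝ) :
    (s ^ 2 + sin φ ^ 2) / 2 ≤ cosh s + cos φ := by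
  have hsin : sin φ ^ 2 ≤ 2 * (1 + cos φ) := by
    nlinarith [sin_sq_add_cos_sq φ, neg_one_le_cos φ, cos_le_one φ]
  linarith [sq_div_two_add_one_add_cos_le_cosh_add_cos s φ]

/-- With `a = |α|` and `φ = θ₁ - θ₂`, this dominates the modulus of the fraction in `B_α`. -/
noncomputable def kernelFractionMajorant (a φ s : ℝ) : ℝ :=
  (|exp (-s) + cos φ| * sinh (s * a) + |sin φ| * cosh (s * a)) / (cosh s + cos φ)

theorem kernelFractionMajorant_le_of_le_one {a s : ℝ} (φ : ℝ) (ha0 : 0 ≤ a) (ha1 : a ≤ 1)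
    (hs0 : 0 < s) (hs1 : s ≤ 1) :
    kernelFractionMajorant a φ s ≤ 4 + 6 * (|sin φ| / (s ^ 2 + sin φ ^ 2)) := by
  have hD₁ := sq_div_two_add_one_add_cos_le_cosh_add_cos s φ
  set δ := 1 + cos φ
  have hδ : 0 ≤ δ := by linarith [neg_one_le_cos φ]
  have hD₂ := sq_add_sin_sq_div_two_le_cosh_add_cos s φ
  have hσ : 0 < s ^ 2 + sin φ ^ 2 := by positivity
  have hD : 0 < cosh s + cos φ := by linarith
  have hsa : 0 ≤ s * a := by positivity
  have hsa1 : s * a ≤ s := mul_le_of_le_one_right hs0.le ha1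
  have hshift : |exp (-s) + cos φ| ≤ s + δ := by
    have h1 : exp (-s) ≤ 1 := exp_le_one_iff.2 (by linarith)
    have h2 : 1 - s ≤ exp (-s) := by linarith [add_one_le_exp (-s)]
    rw [abs_le]
    constructor <;> linarith
  have hsinh : sinh (s * a) ≤ 2 * s := by
    have := abs_exp_sub_one_le (x := s * a) (by rw [abs_of_nonneg hsa]; linarith)
    rw [abs_of_nonneg hsa] at this
    linarith [sinh_le_exp_sub_one (s * a), le_abs_self (exp (s * a) - 1)]
  have hcosh : cosh (s * a) ≤ 3 := by
    have : exp (s * a) ≤ exp 1 := exp_le_exp.2 (by linarith)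
    linarith [cosh_le_exp hsa, exp_one_lt_d9]
  rw [kernelFractionMajorant, add_div]
  gcongr
  · rw [div_le_iff₀ hD]
    calc |exp (-s) + cos φ| * sinh (s * a) ≤ (s + δ) * (2 * s) :=
          mul_le_mul hshift hsinh (sinh_nonneg_iff.2 hsa) (by positivity)
      _ ≤ 4 * (s ^ 2 / 2 + δ) := by nlinarith
      _ ≤ 4 * (cosh s + cos φ) := by gcongr
  · rw [div_le_iff₀ hD]
    calc |sin φ| * cosh (s * a) ≤ |sin φ| * 3 := by gcongr
      _ = 6 * (|sin φ| / (s ^ 2 + sin φ ^ 2)) * ((s ^ 2 + sin φ ^ 2) / 2) := by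
          field_simp
          ring
      _ ≤ 6 * (|sin φ| / (s ^ 2 + sin φ ^ 2)) * (cosh s + cos φ) := by gcongr

theorem kernelFractionMajorant_le_of_one_le {a s : ℝ} (φ : ℝ) (ha0 : 0 ≤ a) (hs : 1 ≤ s) :
    kernelFractionMajorant a φ s ≤ 16 * exp (-(1 - a) * s) := by
  have hsa : 0 ≤ s * a := by positivity
  have hD : exp s / 8 ≤ cosh s + cos φ := by
    have : exp 1 ≤ exp s := exp_le_exp.2 hs
    have : exp s / 2 ≤ cosh s := by rw [cosh_eq]; linarith [exp_pos (-s)]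
    linarith [exp_one_gt_d9, neg_one_le_cos φ]
  have hshift : |exp (-s) + cos φ| ≤ 2 := by
    have : exp (-s) ≤ 1 := exp_le_one_iff.2 (by linarith)
    rw [abs_le]
    constructor <;> linarith [exp_pos (-s), neg_one_le_cos φ, cos_le_one φ]
  have hnum : |exp (-s) + cos φ| * sinh (s * a) + |sin φ| * cosh (s * a) ≤ 2 * exp (s * a) := by
    have h1 : |exp (-s) + cos φ| * sinh (s * a) ≤ 2 * (exp (s * a) / 2) :=
      mul_le_mul hshift (sinh_le_exp_div_two _) (sinh_nonneg_iff.2 hsa) zero_le_two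
    have h2 : |sin φ| * cosh (s * a) ≤ 1 * exp (s * a) :=
      mul_le_mul (abs_sin_le_one φ) (cosh_le_exp hsa) (cosh_pos _).le zero_le_one
    linarith
  have hexp : exp (-(1 - a) * s) * exp s = exp (s * a) := by
    rw [← exp_add]
    ring_nf
  rw [kernelFractionMajorant, div_le_iff₀ (by linarith [exp_pos s])]
  calc _ ≤ 2 * exp (s * a) := hnum
    _ = 16 * exp (-(1 - a) * s) * (exp s / 8) := by rw [← hexp]; ring
    _ ≤ _ := by gcongr

noncomputable def kernelMajorant (a k s : ℝ) : ℝ :=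
  exp (-a * s) + 16 * exp (-(1 - a) * s) + 6 * (|k| / (s ^ 2 + k ^ 2))

theorem exp_add_kernelFractionMajorant_le {a s : ℝ} (φ : ℝ) (ha0 : 0 ≤ a) (ha1 : a ≤ 1)
    (hs : 0 < s) : exp (-a * s) + kernelFractionMajorant a φ s ≤ kernelMajorant a (sin φ) s := by
  rw [kernelMajorant, add_assoc, add_le_add_iff_left]
  rcases le_total s 1 with hs1 | hs1
  · have hexp : exp (-1) ≤ exp (-(1 - a) * s) := exp_le_exp.2 (by nlinarith)
    have he : 1 / 4 ≤ exp (-1) := by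
      rw [exp_neg, one_div]
      exact inv_anti₀ (exp_pos 1) (by linarith [exp_one_lt_d9])
    linarith [kernelFractionMajorant_le_of_le_one φ ha0 ha1 hs hs1]
  · have : 0 ≤ |sin φ| / (s ^ 2 + sin φ ^ 2) := by positivity
    linarith [kernelFractionMajorant_le_of_one_le φ ha0 hs1]

theorem kernelMajorant_integrableOn_and_integral_le {a : ℝ} (k : ℝ) (ha0 : 0 < a) (ha1 : a < 1) :
    IntegrableOn (kernelMajorant a k) (Ioi 0) ∧
      ∫ s in Ioi 0, kernelMajorant a k s ≤ 1 / a + 16 / (1 - a) + 3 * π := by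
  have ha : -a < 0 := by linarith
  have hb : -(1 - a) < 0 := by linarith
  obtain ⟨hlor, hlor_int⟩ := integrableOn_Ioi_abs_div_sq_add_sq_and_integral_le k
  have h₁₂ : IntegrableOn (fun s => exp (-a * s) + 16 * exp (-(1 - a) * s)) (Ioi 0) :=
    (integrableOn_exp_mul_Ioi ha 0).add ((integrableOn_exp_mul_Ioi hb 0).const_mul 16)
  have h₃ := hlor.const_mul 6
  unfold kernelMajorant
  refine ⟨h₁₂.add h₃, ?_⟩
  rw [integral_add h₁₂ h₃, integral_add (integrableOn_exp_mul_Ioi ha 0)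
      ((integrableOn_exp_mul_Ioi hb 0).const_mul 16), integral_const_mul, integral_const_mul,
    integral_exp_mul_Ioi ha, integral_exp_mul_Ioi hb, mul_zero, mul_zero, exp_zero,
    neg_div_neg_eq, neg_div_neg_eq, mul_one_div]
  linarith

/-- The kernel weight `B_α(s, θ₁, θ₂)`. -/
noncomputable def kernelWeight (α α₁₂ θ₁ θ₂ s : ℝ) : ℂ :=
  -(Complex.exp (-Complex.I * α * (θ₁ - θ₂) - Complex.I * α₁₂) / (4 * (π : ℂ) ^ 2)) *
    ((sin (π * |α|) * exp (-s * |α|) : ℝ) +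
      (sin (α * π) : ℝ) *
        (((exp (-s) + cos (θ₁ - θ₂)) * sinh (s * α) : ℝ) +
          Complex.I * (sin (θ₁ - θ₂) * cosh (s * α) : ℝ)) /
        ((cosh s + cos (θ₁ - θ₂) : ℝ) : ℂ))

theorem measurable_kernelWeight (α α₁₂ θ₁ θ₂ : ℝ) : Measurable (kernelWeight α α₁₂ θ₁ θ₂) := by
  unfold kernelWeight
  fun_prop

theorem norm_ofReal_add_mul_div_le (A p x y D : ℝ) (hD : 0 < D) :
    ‖(A : ℂ) + p * (x + Complex.I * y) / D‖ ≤ |A| + |p| * (|x| + |y|) / D := by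
  calc _ ≤ ‖(A : ℂ)‖ + ‖(p : ℂ) * (x + Complex.I * y) / D‖ := norm_add_le _ _
    _ ≤ ‖(A : ℂ)‖ + ‖(p : ℂ)‖ * (‖(x : ℂ)‖ + ‖Complex.I * y‖) / ‖(D : ℂ)‖ := by
        rw [norm_div, norm_mul]
        gcongr
        exact norm_add_le _ _
    _ = _ := by simp [abs_of_pos hD]

theorem norm_phase_div_le_one (α α₁₂ θ₁ θ₂ : ℝ) :
    ‖-(Complex.exp (-Complex.I * α * (θ₁ - θ₂) - Complex.I * α₁₂) / (4 * (π : ℂ) ^ 2))‖ ≤ 1 := by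
  have hphase : ‖Complex.exp (-Complex.I * α * (θ₁ - θ₂) - Complex.I * α₁₂)‖ = 1 := by
    simp [Complex.norm_exp]
  have hpi : ‖(4 * (π : ℂ) ^ 2)‖ = 4 * π ^ 2 := by
    simp [sq_abs]
  rw [norm_neg, norm_div, hphase, hpi, div_le_one (by positivity)]
  nlinarith [pi_gt_three]

theorem norm_kernelWeight_le {α s : ℝ} (α₁₂ θ₁ θ₂ : ℝ) (hα : |α| ≤ 1) (hs : 0 < s) :
    ‖kernelWeight α α₁₂ θ₁ θ₂ s‖ ≤ kernelMajorant |α| (sin (θ₁ - θ₂)) s := by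
  set φ := θ₁ - θ₂
  have hD : 0 < cosh s + cos φ :=
    lt_of_lt_of_le (by positivity) (sq_add_sin_sq_div_two_le_cosh_add_cos s φ)
  have habs_sinh : |sinh (s * α)| = sinh (s * |α|) := by
    rw [abs_sinh, abs_mul, abs_of_pos hs]
  have habs_cosh : |cosh (s * α)| = cosh (s * |α|) := by
    rw [abs_of_pos (cosh_pos _), ← cosh_abs, abs_mul, abs_of_pos hs]
  have hbracket : ‖((sin (π * |α|) * exp (-s * |α|) : ℝ) : ℂ) + (sin (α * π) : ℝ) *
      ((((exp (-s) + cos φ) * sinh (s * α) : ℝ) : ℂ) + Complex.I * (sin φ * cosh (s * α) : ℝ)) /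
      ((cosh s + cos φ : ℝ) : ℂ)‖ ≤ exp (-|α| * s) + kernelFractionMajorant |α| φ s := by
    refine (norm_ofReal_add_mul_div_le _ _ _ _ _ hD).trans (add_le_add ?_ ?_)
    · rw [abs_mul, abs_of_pos (exp_pos _), show -s * |α| = -|α| * s by ring]
      exact mul_le_of_le_one_left (exp_pos _).le (abs_sin_le_one _)
    · rw [kernelFractionMajorant, abs_mul, abs_mul, habs_sinh, habs_cosh]
      gcongr
      exact mul_le_of_le_one_left (by positivity) (abs_sin_le_one _)
  rw [kernelWeight, norm_mul]
  calc _ ≤ 1 * (exp (-|α| * s) + kernelFractionMajorant |α| φ s) :=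
        mul_le_mul (norm_phase_div_le_one _ _ _ _) hbracket (norm_nonneg _) zero_le_one
    _ ≤ _ := by
        rw [one_mul]
        exact exp_add_kernelFractionMajorant_le φ (abs_nonneg α) hα hs

theorem integrableOn_norm_kernelWeight_and_integral_le {α : ℝ} (α₁₂ θ₁ θ₂ : ℝ)
    (hα0 : 0 < |α|) (hα1 : |α| < 1) :
    IntegrableOn (fun s => ‖kernelWeight α α₁₂ θ₁ θ₂ s‖) (Ioi 0) ∧
      ∫ s in Ioi 0, ‖kernelWeight α α₁₂ θ₁ θ₂ s‖ ≤ 1 / |α| + 16 / (1 - |α|) + 3 * π := by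
  obtain ⟨hg, hg_int⟩ := kernelMajorant_integrableOn_and_integral_le (sin (θ₁ - θ₂)) hα0 hα1
  have hle : ∀ s ∈ Ioi (0 : ℝ), ‖kernelWeight α α₁₂ θ₁ θ₂ s‖ ≤ _ :=
    fun s hs => norm_kernelWeight_le α₁₂ θ₁ θ₂ hα1.le hs
  have hint : IntegrableOn (fun s => ‖kernelWeight α α₁₂ θ₁ θ₂ s‖) (Ioi 0) :=
    hg.mono' (measurable_kernelWeight α α₁₂ θ₁ θ₂).norm.aestronglyMeasurable
      (ae_restrict_of_forall_mem measurableSet_Ioi fun s hs => (norm_norm _).trans_le (hle s hs))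
  exact ⟨hint, (setIntegral_mono_on hint hg measurableSet_Ioi hle).trans hg_int⟩

/-- Uniform `L¹`-in-`s` bound for the kernel weight `B_α`: for `0 < |α| < 1`,
`∫₀^∞ |B_α(s,θ₁,θ₂)| ds` is finite, uniformly in `θ₁, θ₂ ∈ [0,2π]`. -/
theorem stmt14 (α α₁₂ : ℝ) (hα0 : 0 < |α|) (hα1 : |α| < 1) :
    ∃ C > (0:ℝ), ∀ θ₁ ∈ Set.Icc (0:ℝ) (2*π), ∀ θ₂ ∈ Set.Icc (0:ℝ) (2*π),
      IntegrableOn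
        (fun s : ℝ =>
          ‖-(Complex.exp (-Complex.I * α * (θ₁ - θ₂) - Complex.I * α₁₂) / (4 * (π:ℂ)^2)) *
            ((Real.sin (π * |α|) * Real.exp (-s * |α|) : ℝ) +
              (Real.sin (α * π) : ℝ) *
                (((Real.exp (-s) + Real.cos (θ₁ - θ₂)) * Real.sinh (s * α) : ℝ) +
                  Complex.I * (Real.sin (θ₁ - θ₂) * Real.cosh (s * α) : ℝ)) /
                ((Real.cosh s + Real.cos (θ₁ - θ₂) : ℝ) : ℂ))‖)
        (Set.Ioi (0:ℝ)) ∧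
      (∫ s in Set.Ioi (0:ℝ),
          ‖-(Complex.exp (-Complex.I * α * (θ₁ - θ₂) - Complex.I * α₁₂) / (4 * (π:ℂ)^2)) *
            ((Real.sin (π * |α|) * Real.exp (-s * |α|) : ℝ) +
              (Real.sin (α * π) : ℝ) *
                (((Real.exp (-s) + Real.cos (θ₁ - θ₂)) * Real.sinh (s * α) : ℝ) +
                  Complex.I * (Real.sin (θ₁ - θ₂) * Real.cosh (s * α) : ℝ)) /
                ((Real.cosh s + Real.cos (θ₁ - θ₂) : ℝ) : ℂ))‖) ≤ C := by
  have hC : 0 < 1 / |α| + 16 / (1 - |α|) + 3 * π := by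
    have := sub_pos.2 hα1
    positivity
  exact ⟨_, hC, fun θ₁ _ θ₂ _ => integrableOn_norm_kernelWeight_and_integral_le α₁₂ θ₁ θ₂ hα0 hα1⟩
end
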